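/- Let r ≥ 1, let λ and μ be complex numbers with λ ≠ μ, and let γ be a nonzero complex number. Then the pair of (r+2)×(r+1) complex matrices (F_r ⊕ I₂, (K_r ⊕ diag(λ, μ)) + γ·E_{1,r+1}) is equivalent to the pair (F_{r+1} ⊕ [1], K_{r+1} ⊕ [λ]), where [1] and [λ] are 1×1 blocks. -/

import Mathlib

open Matrix

noncomputable section

/-- The `M × N` complex matrix obtained by placing the matrix `A` with its top-left corner
at (1-based) position `(ri+1, ci+1)` (i.e. with row offset `ri` and column offset `ci`),
with all other entries zero.  Block-diagonal direct sums of (possibly rectangular) matrices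
are expressed as sums of such placements along the diagonal. -/
def place {M N m n : ℕ} (ri ci : ℕ) (A : Matrix (Fin m) (Fin n) ℂ) :
    Matrix (Fin M) (Fin N) ℂ := fun i j =>
  if hi : ri ≤ (i : ℕ) ∧ (i : ℕ) < ri + m then
    if hj : ci ≤ (j : ℕ) ∧ (j : ℕ) < ci + n then
      A ⟨(i : ℕ) - ri, by omega⟩ ⟨(j : ℕ) - ci, by omega⟩
    else 0
  else 0

/-- The `r × (r-1)` matrix `F_r` with ones on the main diagonal and zeros elsewhere. -/
def MatF (r : ℕ) : Matrix (Fin r) (Fin (r - 1)) ℂ :=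
  fun i j => if (i : ℕ) = (j : ℕ) then 1 else 0

/-- The `r × (r-1)` matrix `K_r` with ones on the subdiagonal and zeros elsewhere. -/
def MatK (r : ℕ) : Matrix (Fin r) (Fin (r - 1)) ℂ :=
  fun i j => if (i : ℕ) = (j : ℕ) + 1 then 1 else 0

/-- The matrix unit `E_{a,b}` (1-based indices): entry `(a,b)` is `1`, all others `0`. -/
def Estd {M N : ℕ} (a b : ℕ) : Matrix (Fin M) (Fin N) ℂ :=
  fun i j => if (i : ℕ) + 1 = a ∧ (j : ℕ) + 1 = b then 1 else 0

/-- Two pairs `(A₁, A₂)` and `(B₁, B₂)` of `m × n` complex matrices are equivalent if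
`B₁ = R * A₁ * S` and `B₂ = R * A₂ * S` for some invertible `R`, `S`. -/
def PairEquiv {m n : ℕ} (A₁ A₂ B₁ B₂ : Matrix (Fin m) (Fin n) ℂ) : Prop :=
  ∃ (R : Matrix (Fin m) (Fin m) ℂ) (S : Matrix (Fin n) (Fin n) ℂ),
    IsUnit R ∧ IsUnit S ∧ B₁ = R * A₁ * S ∧ B₂ = R * A₂ * S

/-!
View the pairs as two maps `ℂ^(r+1) → ℂ^(r+2)` and let `e_k` be standard basis vectors. Starting
from the `μ`-column, `c₀ = e_r`, `c_{j+1} = μ c_j + γ e_j`, and the analogous vectors `c'_j` in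
the target, satisfy `A₁ c_j = c'_j` and `A₂ c_j = c'_{j+1}` for `j < r`: the term `γ E_{1,r+1}`
glues the `μ`-block onto `(F_r, K_r)` into one block `(F_{r+1}, K_{r+1})`, while `e_{r-1}` still
spans the `λ`-block. Since `γ ≠ 0`, `e_j = γ⁻¹ (c_{j+1} - μ c_j)`, so `c₀, …, c_{r-1}, e_{r-1}`
and `c'₀, …, c'_r, e_r` are bases; they are the columns of the two transition matrices.
-/

/-- The `k`-th standard basis vector of `ℂ^m` (0-based), and `0` when `m ≤ k`. -/
def unitVec (m k : ℕ) : Fin m → ℂ := fun i => if (i : ℕ) = k then 1 else 0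

lemma mulVec_unitVec {m n : ℕ} (M : Matrix (Fin m) (Fin n) ℂ) {k : ℕ} (hk : k < n) :
    M *ᵥ unitVec n k = fun i => M i ⟨k, hk⟩ := by
  funext i
  rw [mulVec, dotProduct, Finset.sum_eq_single ⟨k, hk⟩]
  · simp [unitVec]
  · intro j _ hj
    simp [unitVec, Fin.ext_iff.not.mp hj]
  · simp

lemma mul_eq_mul_of_mulVec_unitVec {l m n p : ℕ} {A : Matrix (Fin l) (Fin m) ℂ}
    {S : Matrix (Fin m) (Fin n) ℂ} {Q : Matrix (Fin l) (Fin p) ℂ} {B : Matrix (Fin p) (Fin n) ℂ}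
    (h : ∀ j : Fin n, A *ᵥ (S *ᵥ unitVec n j) = Q *ᵥ (B *ᵥ unitVec n j)) :
    A * S = Q * B := by
  ext i j
  have hj := congrFun (h j) i
  rwa [mulVec_mulVec, mulVec_mulVec, mulVec_unitVec _ j.isLt, mulVec_unitVec _ j.isLt] at hj

lemma PairEquiv.of_mul_eq {m n : ℕ} {A₁ A₂ B₁ B₂ : Matrix (Fin m) (Fin n) ℂ}
    {Q : Matrix (Fin m) (Fin m) ℂ} {S : Matrix (Fin n) (Fin n) ℂ} (hQ : IsUnit Q) (hS : IsUnit S)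
    (h₁ : A₁ * S = Q * B₁) (h₂ : A₂ * S = Q * B₂) : PairEquiv A₁ A₂ B₁ B₂ := by
  have hQ' := (Matrix.isUnit_iff_isUnit_det Q).mp hQ
  refine ⟨Q⁻¹, S, (Matrix.isUnit_nonsing_inv_iff).mpr hQ, hS, ?_, ?_⟩
  · rw [Matrix.mul_assoc, h₁, Matrix.nonsing_inv_mul_cancel_left _ _ hQ']
  · rw [Matrix.mul_assoc, h₂, Matrix.nonsing_inv_mul_cancel_left _ _ hQ']

lemma diag_two_apply (x y : ℂ) (a b : Fin 2) :
    !![x, 0; 0, y] a b = if (a : ℕ) = b then (if (a : ℕ) = 0 then x else y) else 0 := by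
  fin_cases a <;> fin_cases b <;> simp

section Chain

variable (m : ℕ) (mu γ : ℂ)

def chainVec : ℕ → Fin m → ℂ
  | 0 => unitVec m (m - 1)
  | j + 1 => mu • chainVec j + γ • unitVec m j

def chainMat : Matrix (Fin m) (Fin m) ℂ :=
  Matrix.of fun i j => if (j : ℕ) + 1 < m then chainVec m mu γ j i else unitVec m (m - 2) i

variable {m}

lemma chainMat_mulVec_unitVec {k : ℕ} (hk : k < m) :
    chainMat m mu γ *ᵥ unitVec m k =
      if k + 1 < m then chainVec m mu γ k else unitVec m (m - 2) := by
  rw [mulVec_unitVec _ hk]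
  split_ifs <;> funext i <;> simp [chainMat, *]

lemma unitVec_mem_range_chainMat (hγ : γ ≠ 0) {k : ℕ} (hk : k < m) :
    unitVec m k ∈ LinearMap.range (chainMat m mu γ).mulVecLin := by
  have hchain : ∀ j, j + 1 < m → chainVec m mu γ j ∈ LinearMap.range (chainMat m mu γ).mulVecLin :=
    fun j hj => ⟨unitVec m j, by
      rw [mulVecLin_apply, chainMat_mulVec_unitVec _ _ (by omega), if_pos hj]⟩
  rcases (by omega : k + 2 < m ∨ k = m - 2 ∨ k = m - 1 ∧ 2 ≤ m) with hk | rfl | ⟨rfl, hm⟩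
  · have hrec : unitVec m k = γ⁻¹ • (chainVec m mu γ (k + 1) - mu • chainVec m mu γ k) := by
      rw [chainVec, add_sub_cancel_left, smul_smul, inv_mul_cancel₀ hγ, one_smul]
    rw [hrec]
    exact Submodule.smul_mem _ _
      (sub_mem (hchain _ (by omega)) (Submodule.smul_mem _ _ (hchain _ (by omega))))
  · exact ⟨unitVec m (m - 1), by
      rw [mulVecLin_apply, chainMat_mulVec_unitVec _ _ (by omega), if_neg (by omega)]⟩
  · exact hchain 0 (by omega)

lemma isUnit_chainMat (hγ : γ ≠ 0) : IsUnit (chainMat m mu γ) := by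
  rw [← mulVec_surjective_iff_isUnit, ← coe_mulVecLin, ← LinearMap.range_eq_top,
    Submodule.eq_top_iff']
  intro v
  rw [pi_eq_sum_univ v]
  refine Submodule.sum_mem _ fun k _ => Submodule.smul_mem _ _ ?_
  convert unitVec_mem_range_chainMat mu γ hγ k.isLt using 1
  funext i
  simp [unitVec, Fin.val_inj, eq_comm]

end Chain

section Pencils

variable (r : ℕ) (lam mu γ : ℂ)

def pairA₁ : Matrix (Fin (r + 2)) (Fin (r + 1)) ℂ :=
  place 0 0 (MatF r) + place r (r - 1) (1 : Matrix (Fin 2) (Fin 2) ℂ)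

def pairA₂ : Matrix (Fin (r + 2)) (Fin (r + 1)) ℂ :=
  place 0 0 (MatK r) + place r (r - 1) !![lam, 0; 0, mu] + γ • Estd 1 (r + 1)

def pairB₁ : Matrix (Fin (r + 2)) (Fin (r + 1)) ℂ :=
  place 0 0 (MatF (r + 1)) + place (r + 1) r !![(1 : ℂ)]

def pairB₂ : Matrix (Fin (r + 2)) (Fin (r + 1)) ℂ :=
  place 0 0 (MatK (r + 1)) + place (r + 1) r !![lam]

variable {r}

lemma pairA₁_mulVec_unitVec (hr : 1 ≤ r) {k : ℕ} (hk : k ≤ r) :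
    pairA₁ r *ᵥ unitVec (r + 1) k = unitVec (r + 2) (if k + 1 < r then k else k + 1) := by
  rw [mulVec_unitVec _ (by omega)]
  funext i
  simp only [pairA₁, Matrix.add_apply, place, MatF, Matrix.one_apply, unitVec, Fin.ext_iff]
  split_ifs <;> first | omega | norm_num

lemma pairA₂_mulVec_unitVec_of_lt {k : ℕ} (hk : k + 1 < r) :
    pairA₂ r lam mu γ *ᵥ unitVec (r + 1) k = unitVec (r + 2) (k + 1) := by
  rw [mulVec_unitVec _ (by omega)]
  funext i
  simp only [pairA₂, Matrix.add_apply, Matrix.smul_apply, place, MatK, Estd, unitVec]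
  split_ifs <;> first | omega | norm_num

lemma pairA₂_mulVec_unitVec_pred (hr : 1 ≤ r) :
    pairA₂ r lam mu γ *ᵥ unitVec (r + 1) (r - 1) = lam • unitVec (r + 2) r := by
  rw [mulVec_unitVec _ (by omega)]
  funext i
  simp only [pairA₂, Matrix.add_apply, Matrix.smul_apply, place, MatK, Estd, unitVec,
    diag_two_apply, Pi.smul_apply]
  split_ifs <;> first | omega | norm_num

lemma pairA₂_mulVec_unitVec_self (hr : 1 ≤ r) :
    pairA₂ r lam mu γ *ᵥ unitVec (r + 1) r =
      mu • unitVec (r + 2) (r + 1) + γ • unitVec (r + 2) 0 := by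
  rw [mulVec_unitVec _ (by omega)]
  funext i
  simp only [pairA₂, Matrix.add_apply, Matrix.smul_apply, place, MatK, Estd, unitVec,
    diag_two_apply, Pi.add_apply, Pi.smul_apply, and_true]
  split_ifs <;> first | omega | norm_num

lemma pairB₁_mulVec_unitVec {k : ℕ} (hk : k ≤ r) :
    pairB₁ r *ᵥ unitVec (r + 1) k = unitVec (r + 2) (if k < r then k else r + 1) := by
  rw [mulVec_unitVec _ (by omega)]
  funext i
  simp only [pairB₁, Matrix.add_apply, place, MatF, unitVec, Matrix.of_apply,
    Matrix.cons_val', Matrix.cons_val_fin_one, Matrix.empty_val']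
  split_ifs <;> first | omega | norm_num

lemma pairB₂_mulVec_unitVec_of_lt {k : ℕ} (hk : k < r) :
    pairB₂ r lam *ᵥ unitVec (r + 1) k = unitVec (r + 2) (k + 1) := by
  rw [mulVec_unitVec _ (by omega)]
  funext i
  simp only [pairB₂, Matrix.add_apply, place, MatK, unitVec, Matrix.of_apply,
    Matrix.cons_val', Matrix.cons_val_fin_one, Matrix.empty_val']
  split_ifs <;> first | omega | norm_num

lemma pairB₂_mulVec_unitVec_self :
    pairB₂ r lam *ᵥ unitVec (r + 1) r = lam • unitVec (r + 2) (r + 1) := by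
  rw [mulVec_unitVec _ (by omega)]
  funext i
  simp only [pairB₂, Matrix.add_apply, place, MatK, unitVec, Pi.smul_apply,
    Matrix.of_apply, Matrix.cons_val', Matrix.cons_val_fin_one, Matrix.empty_val']
  split_ifs <;> first | omega | norm_num

end Pencils

section Reduction

variable {r : ℕ} (lam mu γ : ℂ)

lemma pairA₁_mulVec_chainVec (hr : 1 ≤ r) {j : ℕ} (hj : j < r) :
    pairA₁ r *ᵥ chainVec (r + 1) mu γ j = chainVec (r + 2) mu γ j := by
  induction j with
  | zero => simp [chainVec, pairA₁_mulVec_unitVec hr le_rfl]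
  | succ j ih =>
    rw [chainVec, chainVec, mulVec_add, mulVec_smul, mulVec_smul, ih (by omega),
      pairA₁_mulVec_unitVec hr (by omega), if_pos (by omega)]

lemma pairA₂_mulVec_chainVec (hr : 1 ≤ r) {j : ℕ} (hj : j < r) :
    pairA₂ r lam mu γ *ᵥ chainVec (r + 1) mu γ j = chainVec (r + 2) mu γ (j + 1) := by
  induction j with
  | zero => simp [chainVec, pairA₂_mulVec_unitVec_self lam mu γ hr]
  | succ j ih =>
    rw [chainVec, chainVec, mulVec_add, mulVec_smul, mulVec_smul, ih (by omega),
      pairA₂_mulVec_unitVec_of_lt lam mu γ (by omega)]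

lemma pairA₁_mul_chainMat (hr : 1 ≤ r) :
    pairA₁ r * chainMat (r + 1) mu γ = chainMat (r + 2) mu γ * pairB₁ r := by
  refine mul_eq_mul_of_mulVec_unitVec fun j => ?_
  have hj := j.isLt
  rw [chainMat_mulVec_unitVec _ _ hj, pairB₁_mulVec_unitVec (by omega)]
  by_cases hjr : (j : ℕ) < r
  · rw [if_pos (by omega), if_pos hjr, pairA₁_mulVec_chainVec _ _ hr hjr,
      chainMat_mulVec_unitVec _ _ (by omega), if_pos (by omega)]
  · rw [if_neg (by omega), if_neg hjr, pairA₁_mulVec_unitVec hr (by omega),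
      chainMat_mulVec_unitVec _ _ (by omega), if_neg (by omega), if_neg (by omega)]
    congr 1
    omega

lemma pairA₂_mul_chainMat (hr : 1 ≤ r) :
    pairA₂ r lam mu γ * chainMat (r + 1) mu γ = chainMat (r + 2) mu γ * pairB₂ r lam := by
  refine mul_eq_mul_of_mulVec_unitVec fun j => ?_
  have hj := j.isLt
  rw [chainMat_mulVec_unitVec _ _ hj]
  by_cases hjr : (j : ℕ) < r
  · rw [if_pos (by omega), pairA₂_mulVec_chainVec _ _ _ hr hjr,
      pairB₂_mulVec_unitVec_of_lt lam hjr, chainMat_mulVec_unitVec _ _ (by omega),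
      if_pos (by omega)]
  · have hjr : (j : ℕ) = r := by omega
    rw [hjr, if_neg (by omega), show r + 1 - 2 = r - 1 by omega,
      pairA₂_mulVec_unitVec_pred _ _ _ hr, pairB₂_mulVec_unitVec_self, mulVec_smul,
      chainMat_mulVec_unitVec _ _ (by omega), if_neg (by omega), show r + 2 - 2 = r by omega]

end Reduction

theorem bif_tri_r_lambda_mu_gamma_general (r : ℕ) (hr : 1 ≤ r) (lam mu : ℂ)
    (γ : ℂ) (hγ : γ ≠ 0) :
    PairEquiv
      (place 0 0 (MatF r) + place r (r - 1) (1 : Matrix (Fin 2) (Fin 2) ℂ) :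
        Matrix (Fin (r + 2)) (Fin (r + 1)) ℂ)
      (place 0 0 (MatK r) + place r (r - 1) !![lam, 0; 0, mu] + γ • Estd 1 (r + 1))
      (place 0 0 (MatF (r + 1)) + place (r + 1) r !![(1 : ℂ)])
      (place 0 0 (MatK (r + 1)) + place (r + 1) r !![lam]) :=
  PairEquiv.of_mul_eq (isUnit_chainMat mu γ hγ) (isUnit_chainMat mu γ hγ)
    (pairA₁_mul_chainMat mu γ hr) (pairA₂_mul_chainMat lam mu γ hr)

theorem bif_tri_r_lambda_mu_gamma (r : ℕ) (hr : 1 ≤ r) (lam mu : ℂ) (hlm : lam ≠ mu)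
    (γ : ℂ) (hγ : γ ≠ 0) :
    PairEquiv
      (place 0 0 (MatF r) + place r (r - 1) (1 : Matrix (Fin 2) (Fin 2) ℂ) :
        Matrix (Fin (r + 2)) (Fin (r + 1)) ℂ)
      (place 0 0 (MatK r) + place r (r - 1) !![lam, 0; 0, mu] + γ • Estd 1 (r + 1))
      (place 0 0 (MatF (r + 1)) + place (r + 1) r !![(1 : ℂ)])
      (place 0 0 (MatK (r + 1)) + place (r + 1) r !![lam]) :=
  bif_tri_r_lambda_mu_gamma_general r hr lam mu γ hγ
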